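/- arXiv:2309.07835 — 4 statements merged into one kernel-verified Lean document; each statement's English description precedes it below -/
import Mathlib

section
/- Let T : E → E be α-averaged for some α ∈ (0,1), with nonempty fixed-point set. Then for every z ∈ E, every γ ≥ 0, every t ∈ ℕ, and every j ∈ ℕ with j ≤ t, the marginal fixed-point residual satisfies g_γ^t(z) ≤ sqrt(α / ((1 − α)(t − j + 1))) · (dist(T^j z, fix T) + 2γ). In particular, g_γ^t(z) ≤ min_{j = 0,…,t} sqrt(α / ((1 − α)(t − j + 1))) · (dist(T^j z, fix T) + 2γ). -/
/-!
For an `α`-averaged operator `T = (1 - α) I + α R` on a Hilbert space, the identity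
`‖(1 - α) a + α b‖² = (1 - α) ‖a‖² + α ‖b‖² - α (1 - α) ‖a - b‖²` shows that every step of the
iteration towards a fixed point `s` decreases `‖Tᵏ w - s‖²` by at least `(1 - α)/α` times the
squared residual `‖T (Tᵏ w) - Tᵏ w‖²`. Since `T` is nonexpansive the residuals are antitone, so
summing `n + 1` consecutive steps bounds `n + 1` copies of the last residual by `‖Tʲ w - s‖²`.
Finally, perturbing the starting point by `Δ` with `‖Δ‖ ≤ γ` moves `Tʲ` by at most `γ`.
-/

open Function Metric

theorem norm_one_sub_smul_add_smul_sq {E : Type*} [SeminormedAddCommGroup E]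
    [InnerProductSpace ℝ E] (α : ℝ) (a b : E) :
    ‖(1 - α) • a + α • b‖ ^ 2 = (1 - α) * ‖a‖ ^ 2 + α * ‖b‖ ^ 2 - α * (1 - α) * ‖a - b‖ ^ 2 := by
  rw [norm_add_sq_real, norm_sub_sq_real, norm_smul, norm_smul, mul_pow, mul_pow,
    Real.norm_eq_abs, Real.norm_eq_abs, sq_abs, sq_abs, real_inner_smul_left,
    real_inner_smul_right]
  ring

theorem mul_le_of_add_le_of_antitone {a b : ℕ → ℝ} (ha : ∀ k, 0 ≤ a k)
    (hstep : ∀ k, a (k + 1) + b k ≤ a k) (hb : Antitone b) (n k : ℕ) :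
    ((n : ℝ) + 1) * b (k + n) ≤ a k := by
  induction n generalizing k with
  | zero => simpa using (hstep k).trans' (le_add_of_nonneg_left (ha (k + 1)))
  | succ n ih =>
    have hlast : b (k + (n + 1)) ≤ b k := hb (Nat.le_add_right k (n + 1))
    have hrest := ih (k + 1)
    rw [Nat.add_right_comm, Nat.add_assoc] at hrest
    push_cast
    linarith [hstep k]

theorem antitone_norm_iterate_residual {E : Type*} [SeminormedAddCommGroup E] {T : E → E}
    (hT : LipschitzWith 1 T) (w : E) :
    Antitone fun k => ‖T (T^[k] w) - T^[k] w‖ := by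
  refine antitone_nat_of_succ_le fun k => ?_
  simpa only [iterate_succ_apply', NNReal.coe_one, one_mul] using
    hT.norm_sub_le (T (T^[k] w)) (T^[k] w)

theorem le_mul_infDist_of_forall_le_mul_dist {X : Type*} [PseudoMetricSpace X] {S : Set X}
    (hS : S.Nonempty) {x : X} {r K : ℝ} (hK : 0 < K) (h : ∀ s ∈ S, r ≤ K * dist x s) :
    r ≤ K * infDist x S := by
  rw [← div_le_iff₀' hK, le_infDist hS]
  exact fun s hs => (div_le_iff₀' hK).2 (h s hs)

section Averaged

variable {E : Type*} [NormedAddCommGroup E] [InnerProductSpace ℝ E]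
  {T R : E → E} {α : ℝ}

theorem lipschitzWith_one_of_averaged (hR : LipschitzWith 1 R) (hα0 : 0 ≤ α) (hα1 : α ≤ 1)
    (hT : ∀ x, T x = (1 - α) • x + α • R x) : LipschitzWith 1 T := by
  refine LipschitzWith.of_dist_le_mul fun x y => ?_
  rw [NNReal.coe_one, one_mul, dist_eq_norm, dist_eq_norm, hT, hT]
  calc ‖(1 - α) • x + α • R x - ((1 - α) • y + α • R y)‖
      = ‖(1 - α) • (x - y) + α • (R x - R y)‖ := by congr 1; module
    _ ≤ (1 - α) * ‖x - y‖ + α * ‖R x - R y‖ := by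
        refine (norm_add_le _ _).trans_eq ?_
        rw [norm_smul, norm_smul, Real.norm_of_nonneg (by linarith), Real.norm_of_nonneg hα0]
    _ ≤ (1 - α) * ‖x - y‖ + α * ‖x - y‖ := by
        gcongr
        simpa using hR.norm_sub_le x y
    _ = ‖x - y‖ := by ring

theorem norm_sq_add_div_mul_norm_residual_sq_le (hR : LipschitzWith 1 R) (hα0 : 0 < α)
    (hT : ∀ x, T x = (1 - α) • x + α • R x) (x y : E) :
    ‖T x - T y‖ ^ 2 + (1 - α) / α * ‖(T x - x) - (T y - y)‖ ^ 2 ≤ ‖x - y‖ ^ 2 := by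
  have hdiff : T x - T y = (1 - α) • (x - y) + α • (R x - R y) := by rw [hT, hT]; module
  have hres : (T x - x) - (T y - y) = α • ((R x - R y) - (x - y)) := by rw [hT, hT]; module
  have hRxy : ‖R x - R y‖ ^ 2 ≤ ‖x - y‖ ^ 2 := by
    gcongr
    simpa using hR.norm_sub_le x y
  rw [hdiff, hres, norm_one_sub_smul_add_smul_sq, norm_smul, mul_pow, Real.norm_eq_abs, sq_abs,
    norm_sub_rev (R x - R y)]
  have hcoeff : (1 - α) / α * α ^ 2 = α * (1 - α) := by field_simp
  nlinarith

theorem norm_iterate_residual_le_of_averaged (hR : LipschitzWith 1 R) (hα0 : 0 < α)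
    (hα1 : α < 1) (hT : ∀ x, T x = (1 - α) • x + α • R x) {s : E} (hs : IsFixedPt T s)
    (w : E) (j n : ℕ) :
    ‖T (T^[j + n] w) - T^[j + n] w‖
      ≤ Real.sqrt (α / ((1 - α) * ((n : ℝ) + 1))) * ‖T^[j] w - s‖ := by
  set r : ℕ → ℝ := fun k => ‖T (T^[k] w) - T^[k] w‖
  have hc : 0 < (1 - α) / α := div_pos (by linarith) hα0
  have hstep : ∀ k, ‖T^[k + 1] w - s‖ ^ 2 + (1 - α) / α * r k ^ 2 ≤ ‖T^[k] w - s‖ ^ 2 := by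
    intro k
    simpa [iterate_succ_apply', hs.eq] using
      norm_sq_add_div_mul_norm_residual_sq_le hR hα0 hT (T^[k] w) s
  have hanti : Antitone fun k => (1 - α) / α * r k ^ 2 := fun k l hkl =>
    have hr := antitone_norm_iterate_residual (lipschitzWith_one_of_averaged hR hα0.le hα1.le hT)
      w hkl
    mul_le_mul_of_nonneg_left (pow_le_pow_left₀ (norm_nonneg _) hr 2) hc.le
  have hsum := mul_le_of_add_le_of_antitone (a := fun k => ‖T^[k] w - s‖ ^ 2)
    (fun k => sq_nonneg _) hstep hanti n j
  rw [← Real.sqrt_sq (norm_nonneg (T^[j] w - s)), ← Real.sqrt_mul' _ (sq_nonneg _),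
    Real.le_sqrt (norm_nonneg _) (by positivity), div_mul_eq_mul_div, le_div_iff₀ (by positivity)]
  have hcoeff : ((n : ℝ) + 1) * ((1 - α) / α * r (j + n) ^ 2) * α
      = r (j + n) ^ 2 * ((1 - α) * ((n : ℝ) + 1)) := by field_simp
  nlinarith

end Averaged

theorem averaged_marginal_residual_bound_general
    {E : Type*} [NormedAddCommGroup E] [InnerProductSpace ℝ E]
    (T : E → E) (α : ℝ) (hα0 : 0 < α) (hα1 : α < 1)
    (havg : ∃ R : E → E, (∀ x y : E, ‖R x - R y‖ ≤ ‖x - y‖) ∧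
        ∀ x : E, T x = (1 - α) • x + α • R x)
    (hfix : (Function.fixedPoints T).Nonempty)
    (z : E) (γ : ℝ) (hγ : 0 ≤ γ) (t : ℕ) :
    ∀ j ≤ t,
      sSup {r : ℝ | ∃ Δ : E, ‖Δ‖ ≤ γ ∧ r = ‖T (T^[t] (z + Δ)) - T^[t] (z + Δ)‖}
        ≤ Real.sqrt (α / ((1 - α) * ((t - j : ℕ) + 1)))
            * (Metric.infDist (T^[j] z) (Function.fixedPoints T) + 2 * γ) := by
  intro j hj
  obtain ⟨R, hR, hT⟩ := havg
  have hR' : LipschitzWith 1 R :=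
    LipschitzWith.of_dist_le_mul fun x y => by simpa [dist_eq_norm] using hR x y
  have hTne := lipschitzWith_one_of_averaged hR' hα0.le hα1.le hT
  set K := Real.sqrt (α / ((1 - α) * ((t - j : ℕ) + 1)))
  have hK : 0 < K := Real.sqrt_pos.2 (div_pos hα0 (mul_pos (by linarith) (by positivity)))
  refine Real.sSup_le ?_ (mul_nonneg hK.le (add_nonneg infDist_nonneg (by positivity)))
  rintro _ ⟨Δ, hΔ, rfl⟩
  have hperturb : dist (T^[j] (z + Δ)) (T^[j] z) ≤ γ := by
    simpa [dist_eq_norm] using ((hTne.iterate j).dist_le_mul (z + Δ) z).trans (by simpa using hΔ)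
  have hres : ‖T (T^[t] (z + Δ)) - T^[t] (z + Δ)‖ ≤ K * infDist (T^[j] (z + Δ)) (fixedPoints T) :=
    le_mul_infDist_of_forall_le_mul_dist hfix hK fun s hs => by
      simpa [Nat.add_sub_cancel' hj, dist_eq_norm] using
        norm_iterate_residual_le_of_averaged hR' hα0 hα1 hT hs (z + Δ) j (t - j)
  calc ‖T (T^[t] (z + Δ)) - T^[t] (z + Δ)‖
      ≤ K * (infDist (T^[j] z) (fixedPoints T) + γ) := by
        refine hres.trans (mul_le_mul_of_nonneg_left ?_ hK.le)
        exact infDist_le_infDist_add_dist.trans (by gcongr)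
    _ ≤ K * (infDist (T^[j] z) (fixedPoints T) + 2 * γ) := by gcongr; linarith

theorem averaged_marginal_residual_bound
    {E : Type*} [NormedAddCommGroup E] [InnerProductSpace ℝ E] [CompleteSpace E]
    (T : E → E) (α : ℝ) (hα0 : 0 < α) (hα1 : α < 1)
    (havg : ∃ R : E → E, (∀ x y : E, ‖R x - R y‖ ≤ ‖x - y‖) ∧
        ∀ x : E, T x = (1 - α) • x + α • R x)
    (hfix : (Function.fixedPoints T).Nonempty)
    (z : E) (γ : ℝ) (hγ : 0 ≤ γ) (t : ℕ) :
    ∀ j ≤ t,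
      sSup {r : ℝ | ∃ Δ : E, ‖Δ‖ ≤ γ ∧ r = ‖T (T^[t] (z + Δ)) - T^[t] (z + Δ)‖}
        ≤ Real.sqrt (α / ((1 - α) * ((t - j : ℕ) + 1)))
            * (Metric.infDist (T^[j] z) (Function.fixedPoints T) + 2 * γ) :=
  averaged_marginal_residual_bound_general T α hα0 hα1 havg hfix z γ hγ t
end

section
/- Let T : E → E be α-averaged for some α ∈ (0,1), with nonempty fixed-point set. Then for every z ∈ E and every t ∈ ℕ, the fixed-point residual after t iterations satisfies ‖T(T^t z) − T^t z‖ ≤ sqrt(α / ((1 − α)(t + 1))) · dist(z, fix T). -/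
open scoped RealInnerProductSpace

lemma combo_norm_sq {E : Type*} [NormedAddCommGroup E] [InnerProductSpace ℝ E]
    (α : ℝ) (a b : E) :
    ‖(1-α)•a + α•b‖^2 = (1-α)*‖a‖^2 + α*‖b‖^2 - α*(1-α)*‖a-b‖^2 := by
  have h : ∀ v : E, ‖v‖^2 = ⟪v,v⟫ := fun v => (real_inner_self_eq_norm_sq v).symm
  rw [h, h, h, h]
  simp only [inner_add_left, inner_add_right, inner_sub_left, inner_sub_right,
    inner_smul_left, inner_smul_right, conj_trivial]
  rw [real_inner_comm b a]
  ring

lemma averaged_aux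
    {E : Type*} [NormedAddCommGroup E] [InnerProductSpace ℝ E]
    (T : E → E) (α : ℝ) (hα0 : 0 < α) (hα1 : α < 1)
    (R : E → E) (hR : ∀ x y : E, ‖R x - R y‖ ≤ ‖x - y‖)
    (hT : ∀ x : E, T x = (1 - α) • x + α • R x)
    (s : E) (hs : T s = s)
    (z : E) (t : ℕ) :
    ‖T (T^[t] z) - T^[t] z‖
      ≤ Real.sqrt (α / ((1 - α) * (t + 1))) * ‖z - s‖ := by
  have h1α : (0:ℝ) < 1 - α := by linarith
  -- R fixes s
  have hRs : R s = s := by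
    have h := hT s
    rw [hs] at h
    have h2 : α • R s = α • s := by
      have h3 : α • R s = s - (1-α) • s := by
        rw [eq_sub_iff_add_eq, add_comm]; exact h.symm
      rw [h3, sub_smul, one_smul]; module
    exact smul_right_injective E hα0.ne' h2
  -- T is nonexpansive
  have hTne : ∀ x y : E, ‖T x - T y‖ ≤ ‖x - y‖ := by
    intro x y
    have hd : T x - T y = (1-α)•(x-y) + α•(R x - R y) := by
      rw [hT x, hT y]; module
    rw [hd]
    calc ‖(1-α)•(x-y) + α•(R x - R y)‖ ≤ ‖(1-α)•(x-y)‖ + ‖α•(R x - R y)‖ :=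
          norm_add_le _ _
      _ = (1-α)*‖x-y‖ + α*‖R x - R y‖ := by
          rw [norm_smul, norm_smul, Real.norm_eq_abs, Real.norm_eq_abs,
            abs_of_pos h1α, abs_of_pos hα0]
      _ ≤ (1-α)*‖x-y‖ + α*‖x-y‖ := by nlinarith [hR x y]
      _ = ‖x-y‖ := by ring
  -- Fejér inequality
  have fejer : ∀ x : E,
      ‖T x - s‖^2 + ((1-α)/α) * ‖T x - x‖^2 ≤ ‖x - s‖^2 := by
    intro x
    have hd : T x - s = (1-α)•(x-s) + α•(R x - s) := by rw [hT x]; module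
    have hrr : T x - x = α•(R x - x) := by rw [hT x]; module
    have hineq : ‖R x - s‖ ≤ ‖x - s‖ := by
      have := hR x s; rwa [hRs] at this
    have hTs : ‖T x - s‖^2
        = (1-α)*‖x-s‖^2 + α*‖R x - s‖^2 - α*(1-α)*‖x - R x‖^2 := by
      rw [hd, combo_norm_sq]
      have he : (x-s)-(R x - s) = x - R x := by module
      rw [he]
    have hTx : ((1-α)/α) * ‖T x - x‖^2 = α*(1-α)*‖x - R x‖^2 := by
      rw [hrr, norm_smul, Real.norm_eq_abs, abs_of_pos hα0, norm_sub_rev]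
      field_simp
    have hYX : ‖R x - s‖^2 ≤ ‖x - s‖^2 := pow_le_pow_left₀ (norm_nonneg _) hineq 2
    rw [hTs, hTx]
    nlinarith [hYX, hα0.le]
  -- residuals
  set r : ℕ → ℝ := fun k => ‖T (T^[k] z) - T^[k] z‖ with hrdef
  have hsucc : ∀ k, T^[k+1] z = T (T^[k] z) := fun k =>
    Function.iterate_succ_apply' T k z
  have rmono : ∀ k, r (k+1) ≤ r k := by
    intro k
    show ‖T (T^[k+1] z) - T^[k+1] z‖ ≤ ‖T (T^[k] z) - T^[k] z‖
    rw [hsucc]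
    exact hTne _ _
  have rant : Antitone r := antitone_nat_of_succ_le rmono
  have rnn : ∀ k, 0 ≤ r k := fun k => norm_nonneg _
  -- telescoping sum
  have sum_le : ∀ n,
      (∑ k ∈ Finset.range n, ((1-α)/α) * r k^2) + ‖T^[n] z - s‖^2 ≤ ‖z-s‖^2 := by
    intro n
    induction n with
    | zero => simp
    | succ n ih =>
      rw [Finset.sum_range_succ, hsucc n]
      have hf := fejer (T^[n] z)
      have : r n = ‖T (T^[n] z) - T^[n] z‖ := rfl
      rw [this]
      linarith
  -- lower bound the sum
  have h1 : ((t:ℝ)+1) * (((1-α)/α) * r t^2)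
      ≤ ∑ k ∈ Finset.range (t+1), ((1-α)/α) * r k^2 := by
    have hmem : ∀ k ∈ Finset.range (t+1), ((1-α)/α) * r t^2 ≤ ((1-α)/α) * r k^2 := by
      intro k hk
      have hk' : k ≤ t := Nat.lt_succ_iff.mp (Finset.mem_range.mp hk)
      have hrt : r t ≤ r k := rant hk'
      have hc : (0:ℝ) ≤ (1-α)/α := by positivity
      have : r t^2 ≤ r k^2 := pow_le_pow_left₀ (rnn t) hrt 2
      exact mul_le_mul_of_nonneg_left this hc
    calc ((t:ℝ)+1) * (((1-α)/α) * r t^2)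
        = ∑ _k ∈ Finset.range (t+1), ((1-α)/α) * r t^2 := by
          rw [Finset.sum_const, Finset.card_range]; push_cast; ring
      _ ≤ _ := Finset.sum_le_sum hmem
  have h2 : ((t:ℝ)+1) * (((1-α)/α) * r t^2) ≤ ‖z-s‖^2 := by
    have := sum_le (t+1)
    nlinarith [sq_nonneg ‖T^[t+1] z - s‖]
  have hcoef : (0:ℝ) < ((t:ℝ)+1)*((1-α)/α) := by positivity
  have h3 : r t^2 ≤ (α/((1-α)*(t+1))) * ‖z-s‖^2 := by
    have h3' : r t^2 ≤ ‖z-s‖^2 / (((t:ℝ)+1)*((1-α)/α)) :=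
      (le_div_iff₀ hcoef).mpr (by linarith [h2])
    have heq : ‖z-s‖^2 / (((t:ℝ)+1)*((1-α)/α)) = (α/((1-α)*(t+1))) * ‖z-s‖^2 := by
      field_simp
    rwa [heq] at h3'
  calc r t = Real.sqrt (r t^2) := (Real.sqrt_sq (rnn t)).symm
    _ ≤ Real.sqrt ((α/((1-α)*(t+1))) * ‖z-s‖^2) := Real.sqrt_le_sqrt h3
    _ = Real.sqrt (α/((1-α)*(t+1))) * ‖z-s‖ := by
        rw [Real.sqrt_mul (by positivity), Real.sqrt_sq (norm_nonneg _)]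

theorem averaged_residual_le_dist
    {E : Type*} [NormedAddCommGroup E] [InnerProductSpace ℝ E] [CompleteSpace E]
    (T : E → E) (α : ℝ) (hα0 : 0 < α) (hα1 : α < 1)
    (havg : ∃ R : E → E, (∀ x y : E, ‖R x - R y‖ ≤ ‖x - y‖) ∧
        ∀ x : E, T x = (1 - α) • x + α • R x)
    (hfix : (Function.fixedPoints T).Nonempty)
    (z : E) (t : ℕ) :
    ‖T (T^[t] z) - T^[t] z‖
      ≤ Real.sqrt (α / ((1 - α) * (t + 1)))
          * Metric.infDist z (Function.fixedPoints T) := by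
  obtain ⟨R, hR, hT⟩ := havg
  set C := Real.sqrt (α / ((1 - α) * (t + 1))) with hC
  have hCpos : 0 < C :=
    Real.sqrt_pos.mpr (div_pos hα0 (mul_pos (by linarith) (by positivity)))
  have hdiv : ‖T (T^[t] z) - T^[t] z‖ / C ≤ Metric.infDist z (Function.fixedPoints T) := by
    rw [Metric.infDist_eq_iInf]
    haveI : Nonempty (Function.fixedPoints T) := hfix.to_subtype
    apply le_ciInf
    intro y
    rw [div_le_iff₀ hCpos, dist_eq_norm]
    have := averaged_aux T α hα0 hα1 R hR hT y y.2 z t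
    linarith [this]
  have := (div_le_iff₀ hCpos).mp hdiv
  linarith [this]
end

section
/- Let T : E → E be α-averaged for some α ∈ (0,1), with nonempty fixed-point set, and let z* ∈ E satisfy T z* = z*. Then for all z ∈ E and all natural numbers k ≤ t, ‖T(T^t z) − T^t z‖ ≤ sqrt(α / ((1 − α)(t − k + 1))) · ‖T^k z − z*‖. -/
open scoped RealInnerProductSpace

set_option maxHeartbeats 1000000 in
theorem averaged_residual_reg_ratio
    {E : Type*} [NormedAddCommGroup E] [InnerProductSpace ℝ E] [CompleteSpace E]
    (T : E → E) (α : ℝ) (hα0 : 0 < α) (hα1 : α < 1)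
    (havg : ∃ R : E → E, (∀ x y : E, ‖R x - R y‖ ≤ ‖x - y‖) ∧
        ∀ x : E, T x = (1 - α) • x + α • R x)
    (hfix : (Function.fixedPoints T).Nonempty)
    (zstar : E) (hz : T zstar = zstar)
    (z : E) (k t : ℕ) (hkt : k ≤ t) :
    ‖T (T^[t] z) - T^[t] z‖
      ≤ Real.sqrt (α / ((1 - α) * ((t - k : ℕ) + 1))) * ‖T^[k] z - zstar‖ := by
  obtain ⟨R, hR, hT⟩ := havg
  have hα0' : (α : ℝ) ≠ 0 := ne_of_gt hα0
  have h1α : 0 < 1 - α := by linarith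
  -- R fixes zstar
  have hRz : R zstar = zstar := by
    have h3 := hT zstar
    rw [hz] at h3
    have h4 : α • R zstar = α • zstar := by
      have h5 : (1 - α) • zstar + α • R zstar = (1 - α) • zstar + α • zstar := by
        rw [← h3]; module
      exact add_left_cancel h5
    exact smul_right_injective E hα0' h4
  -- T is nonexpansive
  have hTne : ∀ x y : E, ‖T x - T y‖ ≤ ‖x - y‖ := by
    intro x y
    have h : T x - T y = (1 - α) • (x - y) + α • (R x - R y) := by
      rw [hT, hT]; module
    rw [h]
    calc ‖(1 - α) • (x - y) + α • (R x - R y)‖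
        ≤ ‖(1 - α) • (x - y)‖ + ‖α • (R x - R y)‖ := norm_add_le _ _
      _ = (1 - α) * ‖x - y‖ + α * ‖R x - R y‖ := by
          rw [norm_smul, norm_smul, Real.norm_of_nonneg h1α.le,
            Real.norm_of_nonneg hα0.le]
      _ ≤ ‖x - y‖ := by nlinarith [hR x y, norm_nonneg (x - y)]
  -- key inequality
  have hkey : ∀ x : E, ((1 - α) / α) * ‖T x - x‖ ^ 2
      ≤ ‖x - zstar‖ ^ 2 - ‖T x - zstar‖ ^ 2 := by
    intro x
    have hd : ‖R x - zstar‖ ≤ ‖x - zstar‖ := by simpa [hRz] using hR x zstar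
    have e1 : T x - zstar = (1 - α) • (x - zstar) + α • (R x - zstar) := by
      rw [hT]; module
    have e2 : T x - x = α • (R x - zstar - (x - zstar)) := by
      rw [hT]; module
    set c := x - zstar with hc
    set d := R x - zstar with hdd
    rw [e1, e2]
    have n1 : ‖(1 - α) • c + α • d‖ ^ 2
        = (1 - α) ^ 2 * ‖c‖ ^ 2 + 2 * ((1 - α) * α) * ⟪c, d⟫ + α ^ 2 * ‖d‖ ^ 2 := by
      rw [norm_add_sq_real, norm_smul, norm_smul, real_inner_smul_left,
        real_inner_smul_right, Real.norm_of_nonneg h1α.le, Real.norm_of_nonneg hα0.le]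
      ring
    have n2 : ‖d - c‖ ^ 2 = ‖d‖ ^ 2 - 2 * ⟪c, d⟫ + ‖c‖ ^ 2 := by
      rw [norm_sub_sq_real, real_inner_comm]
    have n3 : ‖α • (d - c)‖ ^ 2 = α ^ 2 * ‖d - c‖ ^ 2 := by
      rw [norm_smul, Real.norm_of_nonneg hα0.le]; ring
    have hdiv : ((1 - α) / α) * (α ^ 2 * ‖d - c‖ ^ 2) = (1 - α) * α * ‖d - c‖ ^ 2 := by
      field_simp
    rw [n3, hdiv, n1, n2]
    have hd2 : ‖d‖ ^ 2 ≤ ‖c‖ ^ 2 := by nlinarith [norm_nonneg d, norm_nonneg c]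
    nlinarith [mul_le_mul_of_nonneg_left hd2 hα0.le]
  have hkey' : ∀ x : E, ‖T x - x‖ ^ 2
      ≤ (α / (1 - α)) * (‖x - zstar‖ ^ 2 - ‖T x - zstar‖ ^ 2) := by
    intro x
    have h := hkey x
    calc ‖T x - x‖ ^ 2 = (α / (1 - α)) * (((1 - α) / α) * ‖T x - x‖ ^ 2) := by
          field_simp
      _ ≤ (α / (1 - α)) * (‖x - zstar‖ ^ 2 - ‖T x - zstar‖ ^ 2) := by
          apply mul_le_mul_of_nonneg_left h
          positivity
  -- telescoping induction
  have main : ∀ m : ℕ, ((m : ℝ) + 1) * ‖T (T^[k + m] z) - T^[k + m] z‖ ^ 2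
      ≤ (α / (1 - α)) * (‖T^[k] z - zstar‖ ^ 2 - ‖T^[k + m + 1] z - zstar‖ ^ 2) := by
    intro m
    induction m with
    | zero =>
      simpa [Function.iterate_succ_apply'] using hkey' (T^[k] z)
    | succ m ih =>
      have hit : T^[k + (m + 1)] z = T (T^[k + m] z) := by
        rw [show k + (m + 1) = (k + m) + 1 from rfl, Function.iterate_succ_apply']
      have hit2 : T^[k + (m + 1) + 1] z = T (T^[k + (m + 1)] z) := by
        rw [Function.iterate_succ_apply']
      have hmono : ‖T (T^[k + (m + 1)] z) - T^[k + (m + 1)] z‖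
          ≤ ‖T (T^[k + m] z) - T^[k + m] z‖ := by
        rw [hit]; exact hTne _ _
      have hk2 := hkey' (T^[k + (m + 1)] z)
      have hmono2 : ‖T (T^[k + (m + 1)] z) - T^[k + (m + 1)] z‖ ^ 2
          ≤ ‖T (T^[k + m] z) - T^[k + m] z‖ ^ 2 := by
        nlinarith [norm_nonneg (T (T^[k + (m + 1)] z) - T^[k + (m + 1)] z)]
      have hcast : ((m + 1 : ℕ) : ℝ) = (m : ℝ) + 1 := by push_cast; ring
      rw [Function.iterate_succ_apply'] at ih
      rw [hcast, hit2]
      rw [hit] at hk2 ⊢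
      have hnn : (0 : ℝ) ≤ (m : ℝ) + 1 := by positivity
      rw [← hit] at hmono2
      rw [hit] at hmono2
      nlinarith [mul_le_mul_of_nonneg_left hmono2 hnn, ih, hk2]
  have hmt := main (t - k)
  rw [Nat.add_sub_cancel' hkt, Function.iterate_succ_apply'] at hmt
  have hn1 : (0 : ℝ) < ((t - k : ℕ) : ℝ) + 1 := by positivity
  have hcoef : (0 : ℝ) ≤ α / ((1 - α) * (((t - k : ℕ) : ℝ) + 1)) := by
    apply div_nonneg hα0.le
    exact mul_nonneg h1α.le hn1.le
  have hQ : (0 : ℝ) ≤ ‖T (T^[t] z) - zstar‖ ^ 2 := by positivity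
  have hC : (0 : ℝ) ≤ α / (1 - α) := by positivity
  have h6 : (((t - k : ℕ) : ℝ) + 1) * ‖T (T^[t] z) - T^[t] z‖ ^ 2
      ≤ (α / (1 - α)) * ‖T^[k] z - zstar‖ ^ 2 := by
    nlinarith [hmt, mul_le_mul_of_nonneg_left hQ hC]
  have hfin : ‖T (T^[t] z) - T^[t] z‖ ^ 2
      ≤ (α / ((1 - α) * (((t - k : ℕ) : ℝ) + 1))) * ‖T^[k] z - zstar‖ ^ 2 := by
    rw [show α / ((1 - α) * (((t - k : ℕ) : ℝ) + 1))
        = (α / (1 - α)) / (((t - k : ℕ) : ℝ) + 1) from (div_div _ _ _).symm,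
      div_mul_eq_mul_div, le_div_iff₀ hn1]
    nlinarith [h6]
  calc ‖T (T^[t] z) - T^[t] z‖
      = Real.sqrt (‖T (T^[t] z) - T^[t] z‖ ^ 2) := (Real.sqrt_sq (norm_nonneg _)).symm
    _ ≤ Real.sqrt ((α / ((1 - α) * (((t - k : ℕ) : ℝ) + 1))) * ‖T^[k] z - zstar‖ ^ 2) :=
        Real.sqrt_le_sqrt hfin
    _ = Real.sqrt (α / ((1 - α) * (((t - k : ℕ) : ℝ) + 1))) * ‖T^[k] z - zstar‖ := by
        rw [Real.sqrt_mul hcoef, Real.sqrt_sq (norm_nonneg _)]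
end

section
/- Let p and q be probability measures on a measurable space Ω with q absolutely continuous with respect to p, and let S ⊆ Ω be a measurable set with q(S) ≥ 1/2. Then the conditional measure q|S satisfies KL(q|S ‖ p) ≤ 2 (KL(q ‖ p) + 1). -/
open MeasureTheory ProbabilityTheory
open scoped Classical

/-- The Kullback–Leibler divergence `KL(q ‖ p)`, taking value `⊤` when `q` is not
absolutely continuous with respect to `p` or when the log-likelihood ratio is not
integrable. -/

noncomputable def klDiv {Ω : Type*} [MeasurableSpace Ω] (q p : Measure Ω) : EReal :=
  if q ≪ p ∧ Integrable (llr q p) q then ((∫ ω, llr q p ω ∂q : ℝ) : EReal) else ⊤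

/-!
Write `f = llr q p` and `c = q S`. On `S` the log-likelihood ratio of `q|S` is `f - log c`, so
`KL(q|S ‖ p) = c⁻¹ ∫_S f dq - log c`. Pointwise `f ≥ -e⁻¹ e^{-f}`, and `∫ e^{-f} dq ≤ 1` because
`e^{-f} = dp/dq`; hence `∫_{Sᶜ} f dq ≥ -e⁻¹`, i.e. `∫_S f dq ≤ KL(q ‖ p) + e⁻¹`. With `c ≥ 1/2`,
Gibbs' inequality `KL(q ‖ p) ≥ 0` and `-log c ≤ c⁻¹ - 1 ≤ 1`, this gives
`KL(q|S ‖ p) ≤ 2 (KL(q ‖ p) + e⁻¹) + 1 ≤ 2 (KL(q ‖ p) + 1)`.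
-/

open Real

section

variable {Ω : Type*} [MeasurableSpace Ω] {p q : Measure Ω}

lemma klDiv_of_ac_of_integrable (hac : q ≪ p) (hint : Integrable (llr q p) q) :
    klDiv q p = ((∫ x, llr q p x ∂q : ℝ) : EReal) :=
  if_pos ⟨hac, hint⟩

lemma klDiv_of_not_integrable (hint : ¬ Integrable (llr q p) q) : klDiv q p = ⊤ :=
  if_neg fun h => hint h.2

lemma neg_exp_neg_one_mul_measureReal_le_setIntegral_llr [IsFiniteMeasure p] [SigmaFinite q]
    (hac : q ≪ p) (hint : Integrable (llr q p) q) (T : Set Ω) :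
    -(exp (-1) * p.real T) ≤ ∫ x in T, llr q p x ∂q := by
  have h_exp : (fun x => exp (-llr q p x)) =ᵐ[q] fun x => (p.rnDeriv q x).toReal :=
    exp_neg_llr hac
  have h_int_exp : Integrable (fun x => exp (-llr q p x)) q :=
    (integrable_congr h_exp).mpr Measure.integrable_toReal_rnDeriv
  have h_pointwise (y : ℝ) : -(exp (-1) * exp (-y)) ≤ y := by
    have := add_one_le_exp (-y - 1)
    rw [sub_eq_add_neg, exp_add] at this
    linarith
  calc -(exp (-1) * p.real T)
      ≤ -(exp (-1) * ∫ x in T, exp (-llr q p x) ∂q) := by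
        rw [integral_congr_ae (ae_restrict_of_ae h_exp)]
        gcongr
        exact Measure.setIntegral_toReal_rnDeriv_le (measure_ne_top p T)
    _ = ∫ x in T, -(exp (-1) * exp (-llr q p x)) ∂q := by
        rw [integral_neg, integral_const_mul]
    _ ≤ ∫ x in T, llr q p x ∂q :=
        integral_mono (h_int_exp.integrableOn.const_mul _).neg hint.integrableOn
          fun x => h_pointwise _

lemma setIntegral_llr_le_integral_llr_add [IsProbabilityMeasure p] [IsFiniteMeasure q]
    (hac : q ≪ p) (hint : Integrable (llr q p) q) {S : Set Ω} (hS : MeasurableSet S) :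
    ∫ x in S, llr q p x ∂q ≤ ∫ x, llr q p x ∂q + exp (-1) := by
  have h_compl := neg_exp_neg_one_mul_measureReal_le_setIntegral_llr hac hint Sᶜ
  have h_prob : p.real Sᶜ ≤ 1 := measureReal_le_one
  rw [← integral_add_compl hS hint]
  nlinarith [exp_pos (-1)]

lemma llr_cond_ae_eq [SigmaFinite p] [IsFiniteMeasure q] (hac : q ≪ p) {S : Set Ω}
    (hS : MeasurableSet S) (hS0 : q S ≠ 0) :
    llr (q[|S]) p =ᵐ[q[|S]] fun x => llr q p x - log (q.real S) := by
  have hacS : q.restrict S ≪ p := Measure.restrict_le_self.absolutelyContinuous.trans hac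
  have h_restrict : llr (q.restrict S) p =ᵐ[q.restrict S] llr q p := by
    filter_upwards [hacS.ae_le (Measure.rnDeriv_restrict q p hS), ae_restrict_mem hS]
      with x hx hxS
    rw [llr, llr, hx, Set.indicator_of_mem hxS]
  have h_smul := llr_smul_left hacS (q S)⁻¹ (ENNReal.inv_ne_zero.mpr (measure_ne_top q S))
    (ENNReal.inv_ne_top.mpr hS0)
  rw [ProbabilityTheory.cond]
  refine Measure.ae_smul_measure ?_ _
  filter_upwards [h_smul, h_restrict] with x hx_smul hx_restrict
  rw [hx_smul, hx_restrict, ENNReal.toReal_inv, log_inv, measureReal_def]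
  ring

lemma integrable_llr_cond [SigmaFinite p] [IsFiniteMeasure q] (hac : q ≪ p)
    (hint : Integrable (llr q p) q) {S : Set Ω} (hS : MeasurableSet S) (hS0 : q S ≠ 0) :
    Integrable (llr (q[|S]) p) (q[|S]) := by
  have := cond_isProbabilityMeasure hS0
  refine (integrable_congr (llr_cond_ae_eq hac hS hS0)).mpr (Integrable.sub ?_ (integrable_const _))
  exact hint.integrableOn.smul_measure (ENNReal.inv_ne_top.mpr hS0)

lemma integral_llr_cond [SigmaFinite p] [IsFiniteMeasure q] (hac : q ≪ p)
    (hint : Integrable (llr q p) q) {S : Set Ω} (hS : MeasurableSet S) (hS0 : q S ≠ 0) :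
    ∫ x, llr (q[|S]) p x ∂(q[|S]) = (q.real S)⁻¹ * ∫ x in S, llr q p x ∂q - log (q.real S) := by
  have := cond_isProbabilityMeasure hS0
  have hint_cond : Integrable (llr q p) (q[|S]) :=
    hint.integrableOn.smul_measure (ENNReal.inv_ne_top.mpr hS0)
  rw [integral_congr_ae (llr_cond_ae_eq hac hS hS0), integral_sub hint_cond (integrable_const _),
    integral_const, probReal_univ, one_smul, ProbabilityTheory.cond, integral_smul_measure,
    ENNReal.toReal_inv, smul_eq_mul, measureReal_def]

lemma klDiv_cond [SigmaFinite p] [IsFiniteMeasure q] (hac : q ≪ p)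
    (hint : Integrable (llr q p) q) {S : Set Ω} (hS : MeasurableSet S) (hS0 : q S ≠ 0) :
    klDiv (q[|S]) p = (((q.real S)⁻¹ * ∫ x in S, llr q p x ∂q - log (q.real S) : ℝ) : EReal) := by
  rw [klDiv_of_ac_of_integrable (cond_absolutelyContinuous.trans hac)
    (integrable_llr_cond hac hint hS hS0), integral_llr_cond hac hint hS hS0]

end

lemma inv_mul_sub_log_le {c I K : ℝ} (hc : 1 / 2 ≤ c) (hK : 0 ≤ K) (hI : I ≤ K + exp (-1)) :
    c⁻¹ * I - log c ≤ 2 * (K + 1) := by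
  have hc_pos : 0 < c := by linarith
  have hc_inv : c⁻¹ ≤ 2 := by rw [inv_le_comm₀ hc_pos two_pos]; linarith
  have h_log : -log c ≤ 1 := by
    rw [← log_inv]
    linarith [log_le_sub_one_of_pos (inv_pos.mpr hc_pos)]
  have h_exp : exp (-1) ≤ 1 / 2 := by
    rw [exp_neg, inv_le_comm₀ (exp_pos 1) one_half_pos]
    linarith [add_one_le_exp 1]
  rcases le_or_gt 0 I with hI_nonneg | hI_neg
  · nlinarith
  · nlinarith [mul_neg_of_pos_of_neg (inv_pos.mpr hc_pos) hI_neg]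

theorem kl_cond_le {Ω : Type*} [MeasurableSpace Ω] (p q : Measure Ω)
    [IsProbabilityMeasure p] [IsProbabilityMeasure q]
    (hac : q ≪ p) (S : Set Ω) (hS : MeasurableSet S) (hhalf : 1 / 2 ≤ q S) :
    klDiv (q[|S]) p ≤ 2 * (klDiv q p + 1) := by
  by_cases hint : Integrable (llr q p) q
  swap
  · rw [klDiv_of_not_integrable hint, EReal.top_add_of_ne_bot (by decide),
      EReal.mul_top_of_pos (by norm_num)]
    exact le_top
  have hS0 : q S ≠ 0 := (lt_of_lt_of_le (by norm_num) hhalf).ne'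
  have hhalf_real : 1 / 2 ≤ q.real S := by
    simpa [measureReal_def] using ENNReal.toReal_mono (measure_ne_top q S) hhalf
  have h_gibbs : 0 ≤ ∫ x, llr q p x ∂q := by
    simpa using InformationTheory.integral_llr_add_sub_measure_univ_nonneg hac hint
  have h_real := inv_mul_sub_log_le hhalf_real h_gibbs
    (setIntegral_llr_le_integral_llr_add hac hint hS)
  rw [klDiv_cond hac hint hS hS0, klDiv_of_ac_of_integrable hac hint]
  exact (EReal.coe_le_coe_iff.mpr h_real).trans_eq (by norm_cast)
end
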